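/- arXiv:1407.2870 — 2 statements merged into one kernel-verified Lean document; each statement's English description precedes it below -/
import Mathlib

section
/- Let n ≥ 3 be an integer and define f : ℂ∖{0} → ℝ³ by f(z) = (Re(−1/z), log|z|, Re(z^{n−1})/(n−1) − Im z). Then: (1) f is injective; (2) f is an immersion, i.e. its real derivative is injective at every point of ℂ∖{0}; (3) f is proper, i.e. the preimage of every compact subset of ℝ³ is compact. -/
/-!
The second coordinate determines `|z|` and then the first determines `Re z`, so `z` is known up to
conjugation; the third coordinate tells `z` from `conj z` because `Re (z ^ (n - 1))` does not change
under conjugation while `Im z` does.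

The first and third coordinates are real parts of the holomorphic functions `-1/z` and
`z^(n-1)/(n-1) + i z`, with derivatives `1/z²` and `z^(n-2) + i`, and the second has derivative
`v ↦ Re (v z̄) / |z|²`. A kernel vector `v` has `Re (v z̄) = 0` and `Re (v / z²) = 0`, which
together force `Re v = 0` and then `z` real, whereupon `Re ((z^(n-2) + i) v) = -Im v`.

Properness comes from the second coordinate alone: on the preimage of a compact set `log |z|` is
bounded, so the preimage is a closed subset of a compact annulus.
-/

open Complex Filter Function
open scoped ComplexConjugate

theorem hasFDerivAt_log_norm {F : Type*} [NormedAddCommGroup F] [InnerProductSpace ℝ F]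
    {x : F} (hx : x ≠ 0) :
    HasFDerivAt (fun y => Real.log ‖y‖) ((‖x‖ ^ 2)⁻¹ • innerSL ℝ x) x := by
  have hlog : (fun y : F => Real.log ‖y‖) = fun y => Real.log (‖y‖ ^ 2) * 2⁻¹ := by
    funext y
    rw [Real.log_pow]
    ring
  rw [hlog]
  refine (((hasStrictFDerivAt_norm_sq x).hasFDerivAt.log (by positivity)).mul_const 2⁻¹
    ).congr_fderiv ?_
  ext v
  simp only [smul_apply, coe_innerSL_apply, nsmul_eq_mul, Nat.cast_ofNat, smul_eq_mul]
  ring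

theorem HasDerivAt.hasFDerivAt_re {g : ℂ → ℂ} {g' z : ℂ} (h : HasDerivAt g g' z) :
    HasFDerivAt (fun w => (g w).re) (reCLM.comp (g' • (1 : ℂ →L[ℝ] ℂ))) z :=
  reCLM.hasFDerivAt.comp z h.complexToReal_fderiv

theorem Complex.re_div_ofReal_add_I_mul (w z : ℂ) (c : ℝ) :
    (w / c + I * z).re = w.re / c - z.im := by
  rw [add_re, I_mul_re, div_ofReal_re, sub_eq_add_neg]

theorem hasDerivAt_pow_div_add_I_mul {n : ℕ} (hn : 2 ≤ n) (z : ℂ) :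
    HasDerivAt (fun w => w ^ (n - 1) / ((n - 1 : ℝ) : ℂ) + I * w) (z ^ (n - 2) + I) z := by
  have hcast : ((n - 1 : ℕ) : ℂ) = ((n - 1 : ℝ) : ℂ) := by
    push_cast [Nat.cast_sub (by omega : 1 ≤ n)]; rfl
  have hne : ((n - 1 : ℝ) : ℂ) ≠ 0 := by
    rw [← hcast]; exact_mod_cast (by omega : n - 1 ≠ 0)
  refine (((hasDerivAt_pow (n - 1) z).div_const _).add
    ((hasDerivAt_id z).const_mul I)).congr_deriv ?_
  rw [hcast, show n - 1 - 1 = n - 2 by omega, mul_div_cancel_left₀ _ hne, mul_one]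

theorem Complex.eq_or_eq_conj_of_norm_eq_of_inv_re_eq {z w : ℂ} (hnorm : ‖z‖ = ‖w‖)
    (hre : z⁻¹.re = w⁻¹.re) : z = w ∨ z = conj w := by
  have hnormSq : normSq z = normSq w := by
    rw [normSq_eq_norm_sq, normSq_eq_norm_sq, hnorm]
  rcases eq_or_ne z 0 with rfl | hz
  · left
    exact (norm_eq_zero.mp (hnorm.symm.trans norm_zero)).symm
  have hre' : z.re = w.re := by
    rw [inv_re, inv_re, ← hnormSq] at hre
    exact (div_left_inj' (normSq_pos.mpr hz).ne').mp hre
  have him : z.im ^ 2 = w.im ^ 2 := by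
    rw [normSq_apply, normSq_apply, hre'] at hnormSq
    linear_combination hnormSq
  rcases sq_eq_sq_iff_eq_or_eq_neg.mp him with him | him
  · exact Or.inl (Complex.ext hre' him)
  · exact Or.inr (Complex.ext (by simp [hre']) (by simp [him]))

theorem Complex.eq_zero_of_re_mul_eq_zero {z v : ℂ} (hz : z ≠ 0) (k : ℕ)
    (h₁ : ((z ^ 2)⁻¹ * v).re = 0) (h₂ : (v * conj z).re = 0) (h₃ : ((z ^ k + I) * v).re = 0) :
    v = 0 := by
  have hnormSq : normSq z ≠ 0 := (normSq_pos.mpr hz).ne'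
  have h₁' : v.re * (z.re ^ 2 - z.im ^ 2) + v.im * (2 * z.re * z.im) = 0 := by
    rw [mul_re, inv_re, inv_im] at h₁
    field_simp at h₁
    rw [mul_zero, pow_two, mul_re, mul_im] at h₁
    linear_combination h₁
  have h₂' : v.re * z.re + v.im * z.im = 0 := by
    simpa using h₂
  have hre : v.re = 0 := by
    have : v.re * normSq z = 0 := by
      rw [normSq_apply]; linear_combination 2 * z.re * h₂' - h₁'
    exact (mul_eq_zero.mp this).resolve_right hnormSq
  have him : v.im * z.im = 0 := by simpa [hre] using h₂'
  rcases mul_eq_zero.mp him with him | hzim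
  · exact Complex.ext hre him
  have hzk : (z ^ k).im = 0 := by
    rw [← conj_eq_iff_im, map_pow, conj_eq_iff_im.mpr hzim]
  have : v.im * ((z ^ k).im + 1) = 0 := by
    simp only [mul_re, add_re, add_im, I_re, I_im, hre] at h₃
    linear_combination -h₃
  refine Complex.ext hre ?_
  simpa [hzk] using this

theorem isCompact_setOf_ne_zero_mem_of_abs_log_norm_le {E F : Type*} [NormedAddCommGroup E]
    [ProperSpace E] [NormedAddCommGroup F] {g : E → F} (hg : ContinuousOn g {0}ᶜ)
    (hlog : ∀ z ≠ 0, |Real.log ‖z‖| ≤ ‖g z‖) {K : Set F} (hK : IsCompact K) :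
    IsCompact {z | z ≠ 0 ∧ g z ∈ K} := by
  obtain ⟨M, hM⟩ := hK.isBounded.exists_norm_le
  set A : Set E := Metric.closedBall 0 (Real.exp M) \ Metric.ball 0 (Real.exp (-M))
  have hA : IsCompact A := (isCompact_closedBall 0 _).diff Metric.isOpen_ball
  have hA₀ : A ⊆ {0}ᶜ := fun z hz hz₀ =>
    hz.2 (by simp [Set.mem_singleton_iff.mp hz₀, Real.exp_pos])
  have hsub : {z | z ≠ 0 ∧ g z ∈ K} ⊆ A := by
    rintro z ⟨hz, hzK⟩
    have hbound := abs_le.mp ((hlog z hz).trans (hM _ hzK))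
    have hpos := norm_pos_iff.mpr hz
    constructor
    · rw [mem_closedBall_zero_iff, ← Real.exp_log hpos]
      exact Real.exp_le_exp.mpr hbound.2
    · rw [mem_ball_zero_iff, not_lt, ← Real.exp_log hpos]
      exact Real.exp_le_exp.mpr (by linarith [hbound.1])
  have hset : {z | z ≠ 0 ∧ g z ∈ K} = A ∩ g ⁻¹' K :=
    Set.Subset.antisymm (fun z hz => ⟨hsub hz, hz.2⟩) fun z hz => ⟨hA₀ hz.1, hz.2⟩
  rw [hset]
  exact hA.of_isClosed_subset
    ((hg.mono hA₀).preimage_isClosed_of_isClosed hA.isClosed hK.isClosed) Set.inter_subset_left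

noncomputable def sphereMap (n : ℕ) (z : ℂ) : ℝ × ℝ × ℝ :=
  ((-(1 / z)).re, Real.log ‖z‖, (z ^ (n - 1)).re / ((n : ℝ) - 1) - z.im)

theorem sphereMap_injOn (n : ℕ) : Set.InjOn (sphereMap n) {z | z ≠ 0} := by
  intro z hz w hw h
  simp only [sphereMap, Prod.mk.injEq, one_div, neg_re, neg_inj] at h
  obtain ⟨hre, hlog, hthird⟩ := h
  have hnorm : ‖z‖ = ‖w‖ :=
    Real.log_injOn_pos (norm_pos_iff.mpr hz) (norm_pos_iff.mpr hw) hlog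
  rcases eq_or_eq_conj_of_norm_eq_of_inv_re_eq hnorm hre with h | rfl
  · exact h
  · rw [← map_pow, conj_re, conj_im] at hthird
    exact conj_eq_iff_im.mpr (by linarith)

theorem sphereMap_continuousOn (n : ℕ) : ContinuousOn (sphereMap n) {0}ᶜ := by
  refine ContinuousOn.prodMk ?_ (ContinuousOn.prodMk ?_ (by fun_prop))
  · exact continuous_re.comp_continuousOn
      (continuousOn_const.div continuousOn_id fun _ hz => hz).neg
  · exact Real.continuousOn_log.comp continuous_norm.continuousOn fun _ hz =>
      norm_ne_zero_iff.mpr hz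

theorem abs_log_norm_le_norm_sphereMap (n : ℕ) (z : ℂ) : |Real.log ‖z‖| ≤ ‖sphereMap n z‖ :=
  calc |Real.log ‖z‖| = ‖(sphereMap n z).2.1‖ := (Real.norm_eq_abs _).symm
    _ ≤ ‖sphereMap n z‖ := (norm_fst_le _).trans (norm_snd_le _)

theorem hasFDerivAt_sphereMap {n : ℕ} (hn : 2 ≤ n) {z : ℂ} (hz : z ≠ 0) :
    HasFDerivAt (sphereMap n)
      ((reCLM.comp ((z ^ 2)⁻¹ • (1 : ℂ →L[ℝ] ℂ))).prod
        (((‖z‖ ^ 2)⁻¹ • innerSL ℝ z).prod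
          (reCLM.comp ((z ^ (n - 2) + I) • (1 : ℂ →L[ℝ] ℂ))))) z := by
  have h₁ : HasDerivAt (fun w : ℂ => -(1 / w)) (z ^ 2)⁻¹ z := by
    simpa only [one_div, neg_neg] using (hasDerivAt_inv hz).fun_neg
  have h₃ := (hasDerivAt_pow_div_add_I_mul hn z).hasFDerivAt_re
  simp only [re_div_ofReal_add_I_mul] at h₃
  exact h₁.hasFDerivAt_re.prodMk ((hasFDerivAt_log_norm hz).prodMk h₃)

theorem injective_fderiv_sphereMap {n : ℕ} (hn : 2 ≤ n) {z : ℂ} (hz : z ≠ 0) :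
    Injective (fderiv ℝ (sphereMap n) z) := by
  rw [(hasFDerivAt_sphereMap hn hz).fderiv, injective_iff_map_eq_zero]
  intro v hv
  simp only [Prod.ext_iff, ContinuousLinearMap.prod_apply, ContinuousLinearMap.comp_apply,
    smul_apply, one_apply_eq_self, smul_eq_mul, reCLM_apply, coe_innerSL_apply, Complex.inner,
    Prod.fst_zero, Prod.snd_zero] at hv
  obtain ⟨h₁, h₂, h₃⟩ := hv
  have hnorm : (‖z‖ ^ 2)⁻¹ ≠ 0 := by positivity
  exact eq_zero_of_re_mul_eq_zero hz (n - 2) h₁ ((mul_eq_zero.mp h₂).resolve_left hnorm) h₃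

/-- The sphere with one `(0,1,2)` end at `0` and one `(0,1,n)` end at `∞`:
`f(z) = (Re(-1/z), log|z|, Re(z^{n-1})/(n-1) - Im z)` is injective, an
immersion, and proper on `ℂ ∖ {0}`. -/
theorem stmt_3 (n : ℕ) (hn : 3 ≤ n) (f : ℂ → ℝ × ℝ × ℝ)
    (hf : ∀ z, f z =
      ((-(1 / z)).re, Real.log ‖z‖,
        (z ^ (n - 1)).re / ((n : ℝ) - 1) - z.im)) :
    Set.InjOn f {z : ℂ | z ≠ 0} ∧
    (∀ z : ℂ, z ≠ 0 → Function.Injective (fderiv ℝ f z)) ∧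
    (∀ K : Set (ℝ × ℝ × ℝ), IsCompact K →
      IsCompact {z : ℂ | z ≠ 0 ∧ f z ∈ K}) := by
  obtain rfl : f = sphereMap n := funext hf
  exact ⟨sphereMap_injOn n, fun z => injective_fderiv_sphereMap (by omega),
    fun K => isCompact_setOf_ne_zero_mem_of_abs_log_norm_le (sphereMap_continuousOn n)
      fun z _ => abs_log_norm_le_norm_sphereMap n z⟩
end

section
/- Define f : ℂ∖{0} → ℝ³ by f(z) = (Re z, log|z|, −Re(1/z) − Im(z²)/2). Then for every real t > 0 one has f(it) = f(−it) = (0, log t, 0); consequently f is not injective on any punctured neighborhood of 0. -/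
/-!
On the imaginary axis `z = t i` every coordinate of `f` is even in `t`: `Re z = 0`, `1 / z = -i / t`
has real part `0`, and `z² = -t²` is real. So `f(t i) = f(-t i)`, and these two distinct points lie
in every punctured disc around `0`.
-/

open Complex

/-- The harmonic end `Re ∫ (dz, dz / z, (1 / z² + i z) dz)`. -/
noncomputable def harmonicEnd (z : ℂ) : ℝ × ℝ × ℝ :=
  (z.re, Real.log ‖z‖, -(1 / z).re - (z ^ 2).im / 2)

theorem harmonicEnd_ofReal_mul_I (t : ℝ) :
    harmonicEnd (t * I) = (0, Real.log |t|, 0) := by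
  simp [harmonicEnd, sq]

theorem harmonicEnd_neg_ofReal_mul_I (t : ℝ) :
    harmonicEnd (-(t * I)) = harmonicEnd (t * I) := by
  rw [← neg_mul, ← ofReal_neg, harmonicEnd_ofReal_mul_I, harmonicEnd_ofReal_mul_I, abs_neg]

theorem not_injOn_punctured_ball_of_even_on_imaginary_axis {α : Type*} (g : ℂ → α)
    (hg : ∀ t : ℝ, 0 < t → g (t * I) = g (-(t * I))) {ε : ℝ} (hε : 0 < ε) :
    ¬ Set.InjOn g {z : ℂ | 0 < ‖z‖ ∧ ‖z‖ < ε} := by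
  intro hinj
  have ht : 0 < ε / 2 := half_pos hε
  have hnorm : ‖((ε / 2 : ℝ) : ℂ) * I‖ = ε / 2 := by
    simp [hε.le]
  have hmem : ((ε / 2 : ℝ) : ℂ) * I ∈ {z : ℂ | 0 < ‖z‖ ∧ ‖z‖ < ε} := by
    rw [Set.mem_ofPred_eq, hnorm]
    exact ⟨ht, half_lt_self hε⟩
  have hmem_neg : -(((ε / 2 : ℝ) : ℂ) * I) ∈ {z : ℂ | 0 < ‖z‖ ∧ ‖z‖ < ε} := by
    simpa only [Set.mem_ofPred_eq, norm_neg] using hmem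
  have heq := congrArg Complex.im (hinj hmem hmem_neg (hg _ ht))
  simp only [neg_im, mul_im, ofReal_re, ofReal_im, I_re, I_im] at heq
  linarith

/-- The end of type `(0,1,2)` with data `ω₃ = (1/z² + iz)dz` is not embedded:
`f(it) = f(-it) = (0, log t, 0)` for all `t > 0`, so `f` is not injective on
any punctured neighborhood of `0`. -/
theorem stmt_19 (f : ℂ → ℝ × ℝ × ℝ)
    (hf : ∀ z, f z =
      (z.re, Real.log (‖z‖), -(1 / z).re - (z ^ 2).im / 2)) :
    (∀ t : ℝ, 0 < t →
      f ((t : ℂ) * I) = f (-((t : ℂ) * I)) ∧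
      f ((t : ℂ) * I) = (0, Real.log t, 0)) ∧
    (∀ ε > (0 : ℝ),
      ¬ Set.InjOn f {z : ℂ | 0 < ‖z‖ ∧ ‖z‖ < ε}) := by
  obtain rfl : f = harmonicEnd := funext hf
  have haxis (t : ℝ) (ht : 0 < t) :
      harmonicEnd ((t : ℂ) * I) = harmonicEnd (-((t : ℂ) * I)) ∧
        harmonicEnd ((t : ℂ) * I) = (0, Real.log t, 0) :=
    ⟨(harmonicEnd_neg_ofReal_mul_I t).symm, by rw [harmonicEnd_ofReal_mul_I, abs_of_pos ht]⟩
  exact ⟨haxis, fun ε hε =>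
    not_injOn_punctured_ball_of_even_on_imaginary_axis _ (fun t ht => (haxis t ht).1) hε⟩
end
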